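/- Let u : [0,T] × ℝ → ℝ be a smooth bounded solution (with x_t denoting a point where |u(t,x_t)| = ‖u(t)‖_{L^∞}, assumed attained and with u(t,x_t) ≥ 0), and suppose ‖u(t)‖_{L^1} ≤ K. For δ > 0 define Ω₁ = {y : |y − x_t| ≤ δ and u(t,x_t) − u(t,y) ≥ u(t,x_t)/2}. Then Λu(t,x_t) ≥ (u(t,x_t)/(2δ²)) · |Ω₁| and |Ω₁| ≥ 2δ − 2K/u(t,x_t), where |Ω₁| denotes Lebesgue measure. Consequently, choosing δ = 2K/u(t,x_t), Λu(t,x_t) ≥ ‖u(t)‖_{L^∞}²/(4K). -/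

import Mathlib

open MeasureTheory Real Set

noncomputable section

/-- The one-dimensional fractional Laplacian `Λ = (-Δ)^{1/2}`, with the normalization
`Λf(x) = P.V.∫ (f(x) - f(y))/|x-y|² dy` (constant `C₁ = 1`), written in the absolutely
convergent symmetrized form. -/
def Lam1 (f : ℝ → ℝ) (x : ℝ) : ℝ :=
  (1 / 2) * ∫ y, (2 * f x - f (x + y) - f (x - y)) / y ^ 2

set_option maxHeartbeats 2000000 in
/-- Lower bound on the dissipation at a maximum point: if `f = u(t)` is smooth and bounded
with `f x₀ = ‖f‖_{L^∞}`, `f x₀ ≥ 0`, and `‖f‖_{L^1} ≤ K`, then with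
`Ω₁ = {y : |y - x₀| ≤ δ, f x₀ - f y ≥ f x₀/2}` one has
`Λf(x₀) ≥ (f x₀/(2δ²))·|Ω₁|`, `|Ω₁| ≥ 2δ - 2K/f x₀`, and consequently
`Λf(x₀) ≥ ‖f‖_{L^∞}²/(4K)`. -/
theorem stmt13 (K : ℝ) (hK : 0 < K) (f : ℝ → ℝ)
    (hsmooth : ContDiff ℝ (⊤ : ℕ∞) f)
    (hb : ∃ C, ∀ x, |f x| ≤ C)
    (hb2 : ∃ C, ∀ x, |deriv (deriv f) x| ≤ C)
    (hf1 : Integrable f)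
    (x₀ : ℝ) (hmax : f x₀ = ⨆ x, |f x|) (hnn : 0 ≤ f x₀)
    (hK1 : ∫ x, |f x| ≤ K) :
    (∀ δ > (0:ℝ),
      (f x₀ / (2 * δ ^ 2)) *
          (volume {y : ℝ | |y - x₀| ≤ δ ∧ f x₀ - f y ≥ f x₀ / 2}).toReal ≤ Lam1 f x₀ ∧
      2 * δ - 2 * K / f x₀ ≤
          (volume {y : ℝ | |y - x₀| ≤ δ ∧ f x₀ - f y ≥ f x₀ / 2}).toReal) ∧
    (⨆ x, |f x|) ^ 2 / (4 * K) ≤ Lam1 f x₀ := by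
  obtain ⟨C₀, hC₀⟩ := hb
  obtain ⟨C₂, hC₂⟩ := hb2
  have hC₂0 : 0 ≤ C₂ := le_trans (abs_nonneg _) (hC₂ 0)
  have hfc : Continuous f := hsmooth.continuous
  have hbdd : BddAbove (Set.range fun x => |f x|) :=
    ⟨C₀, by rintro _ ⟨x, rfl⟩; exact hC₀ x⟩
  have hle : ∀ x, |f x| ≤ f x₀ := fun x => by rw [hmax]; exact le_ciSup hbdd x
  have hfle : ∀ x, f x ≤ f x₀ := fun x => (le_abs_self _).trans (hle x)
  set M := f x₀ with hMdef
  have hM0 : 0 ≤ M := hnn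
  -- differentiability
  have hdiff : Differentiable ℝ f := hsmooth.differentiable (by simp)
  have hdiff1 : Differentiable ℝ (deriv f) := by
    have hsm2 : ContDiff ℝ ((⊤:ℕ∞) : WithTop ℕ∞) f := hsmooth.of_le (by simp)
    exact (contDiff_infty_iff_deriv.mp hsm2).2.differentiable (by simp)
  -- the integrand
  set g : ℝ → ℝ := fun y => (2 * M - f (x₀ + y) - f (x₀ - y)) / y ^ 2 with hgdef
  have hgnn : ∀ y, 0 ≤ g y := fun y =>
    div_nonneg (by linarith [hfle (x₀ + y), hfle (x₀ - y)]) (sq_nonneg y)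
  have hLam : Lam1 f x₀ = (1 / 2) * ∫ y, g y := rfl
  have hLam0 : 0 ≤ Lam1 f x₀ := by
    rw [hLam]
    have : (0:ℝ) ≤ ∫ y, g y := integral_nonneg hgnn
    linarith
  -- Taylor-type bound on the numerator
  set φ : ℝ → ℝ := fun y => f (x₀ + y) + f (x₀ - y) with hφdef
  set φ' : ℝ → ℝ := fun y => deriv f (x₀ + y) + -(deriv f (x₀ - y)) with hφ'def
  have hφd : ∀ y, HasDerivAt φ (φ' y) y := by
    intro y
    exact ((hdiff (x₀ + y)).hasDerivAt.comp_const_add x₀ y).add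
      ((hdiff (x₀ - y)).hasDerivAt.comp_const_sub x₀ y)
  have hφ'd : ∀ y, HasDerivAt φ' (deriv (deriv f) (x₀ + y) + deriv (deriv f) (x₀ - y)) y := by
    intro y
    have h1 := (hdiff1 (x₀ + y)).hasDerivAt.comp_const_add x₀ y
    have h2 := ((hdiff1 (x₀ - y)).hasDerivAt.comp_const_sub x₀ y).neg
    have h := h1.add h2; rw [neg_neg] at h; exact h
  have hφ'bound : ∀ y : ℝ, |φ' y| ≤ 2 * C₂ * |y| := by
    intro y
    have h := convex_univ.norm_image_sub_le_of_norm_hasDerivWithin_le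
      (f := φ') (f' := fun t => deriv (deriv f) (x₀ + t) + deriv (deriv f) (x₀ - t))
      (C := 2 * C₂) (fun t _ => (hφ'd t).hasDerivWithinAt)
      (fun t _ => by
        rw [Real.norm_eq_abs]
        calc |deriv (deriv f) (x₀ + t) + deriv (deriv f) (x₀ - t)|
            ≤ |deriv (deriv f) (x₀ + t)| + |deriv (deriv f) (x₀ - t)| := abs_add_le _ _
          _ ≤ 2 * C₂ := by linarith [hC₂ (x₀ + t), hC₂ (x₀ - t)])
      (mem_univ (0:ℝ)) (mem_univ y)
    have hφ'0 : φ' 0 = 0 := by simp [hφ'def]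
    simpa [Real.norm_eq_abs, hφ'0] using h
  have hT : ∀ y : ℝ, 2 * M - f (x₀ + y) - f (x₀ - y) ≤ 2 * C₂ * y ^ 2 := by
    intro y
    have h := (convex_uIcc (0:ℝ) y).norm_image_sub_le_of_norm_hasDerivWithin_le
      (f := φ) (f' := φ') (C := 2 * C₂ * |y|)
      (fun t _ => (hφd t).hasDerivWithinAt)
      (fun t ht => by
        rw [Real.norm_eq_abs]
        refine (hφ'bound t).trans ?_
        have : |t| ≤ |y| := by
          rcases le_total 0 y with hy | hy
          · rw [uIcc_of_le hy] at ht
            rw [abs_of_nonneg hy, abs_of_nonneg ht.1]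
            exact ht.2
          · rw [uIcc_of_ge hy] at ht
            rw [abs_of_nonpos hy, abs_of_nonpos (ht.2.trans (le_of_eq rfl))]
            linarith [ht.1]
        nlinarith [abs_nonneg t, abs_nonneg y])
      right_mem_uIcc left_mem_uIcc
    have hφ0 : φ 0 = 2 * M := by simp [hφdef, hMdef]; ring
    rw [Real.norm_eq_abs, Real.norm_eq_abs, hφ0] at h
    have h2 : 2 * M - φ y ≤ |φ 0 - φ y| := by
      rw [hφ0]
      exact le_abs_self _
    have h3 : |φ 0 - φ y| ≤ 2 * C₂ * |y| * |0 - y| := by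
      rw [hφ0]; exact h
    have h4 : 2 * C₂ * |y| * |0 - y| = 2 * C₂ * y ^ 2 := by
      rw [zero_sub, abs_neg, ← sq_abs]; ring
    have : 2 * M - φ y ≤ 2 * C₂ * y ^ 2 := by
      calc 2 * M - φ y ≤ |φ 0 - φ y| := h2
        _ ≤ 2 * C₂ * y ^ 2 := by rw [← h4]; exact h3
    simp only [hφdef] at this
    linarith
  -- domination of g
  have hgb : ∀ y, g y ≤ (2 * C₂ + 4 * M) * (1 + y ^ 2)⁻¹ := by
    intro y
    rcases eq_or_ne y 0 with rfl | hy
    · simp [hgdef]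
      positivity
    · have hy2 : (0:ℝ) < y ^ 2 := by positivity
      have hnum1 : 2 * M - f (x₀ + y) - f (x₀ - y) ≤ 2 * C₂ * y ^ 2 := hT y
      have hnum2 : 2 * M - f (x₀ + y) - f (x₀ - y) ≤ 4 * M := by
        have := abs_le.1 (hle (x₀ + y))
        have := abs_le.1 (hle (x₀ - y))
        linarith [this.1]
      have hg1 : g y ≤ 2 * C₂ := by
        rw [hgdef]
        rw [div_le_iff₀ hy2]
        calc 2 * M - f (x₀ + y) - f (x₀ - y) ≤ 2 * C₂ * y ^ 2 := hnum1
          _ = 2 * C₂ * y ^ 2 := rfl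
      have hg2 : g y * y ^ 2 ≤ 4 * M := by
        rw [hgdef, div_mul_cancel₀ _ (ne_of_gt hy2)]
        exact hnum2
      have h5 : g y * (1 + y ^ 2) ≤ 2 * C₂ + 4 * M := by nlinarith [hgnn y]
      calc g y = g y * (1 + y ^ 2) * (1 + y ^ 2)⁻¹ := by field_simp
        _ ≤ (2 * C₂ + 4 * M) * (1 + y ^ 2)⁻¹ :=
            mul_le_mul_of_nonneg_right h5 (by positivity)
  have hgmeas : Measurable g := by
    apply Measurable.div
    · exact (measurable_const.sub ((hfc.measurable).comp (measurable_const.add measurable_id))).sub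
        ((hfc.measurable).comp (measurable_const.sub measurable_id))
    · exact (measurable_id.pow_const 2)
  have hgint : Integrable g := by
    refine Integrable.mono' (integrable_inv_one_add_sq.const_mul (2 * C₂ + 4 * M))
      hgmeas.aestronglyMeasurable (Filter.Eventually.of_forall fun y => ?_)
    rw [Real.norm_eq_abs, abs_of_nonneg (hgnn y)]
    exact hgb y
  -- the main per-δ statement
  have main : ∀ δ > (0:ℝ),
      (M / (2 * δ ^ 2)) *
          (volume {y : ℝ | |y - x₀| ≤ δ ∧ M - f y ≥ M / 2}).toReal ≤ Lam1 f x₀ ∧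
      2 * δ - 2 * K / M ≤
          (volume {y : ℝ | |y - x₀| ≤ δ ∧ M - f y ≥ M / 2}).toReal := by
    intro δ hδ
    set Ω : Set ℝ := {y : ℝ | |y - x₀| ≤ δ ∧ M - f y ≥ M / 2} with hΩdef
    have hΩclosed : IsClosed Ω := by
      have h1 : IsClosed {y : ℝ | |y - x₀| ≤ δ} :=
        isClosed_le (by continuity) continuous_const
      have h2 : IsClosed {y : ℝ | M - f y ≥ M / 2} :=
        isClosed_le continuous_const (continuous_const.sub hfc)
      exact h1.inter h2
    have hΩmeas : MeasurableSet Ω := hΩclosed.measurableSet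
    have hΩsub : Ω ⊆ Metric.closedBall x₀ δ := fun y hy => by
      simpa [Metric.mem_closedBall, Real.dist_eq] using hy.1
    have hballvol : volume (Metric.closedBall x₀ δ) = ENNReal.ofReal (2 * δ) := by
      rw [Real.volume_closedBall]
    have hΩfin : volume Ω ≠ ⊤ := by
      refine ne_top_of_le_ne_top ?_ (measure_mono hΩsub)
      rw [hballvol]; exact ENNReal.ofReal_ne_top
    constructor
    · -- dissipation lower bound
      set c : ℝ := M / (2 * δ ^ 2) with hcdef
      have hc0 : 0 ≤ c := by positivity
      set Ap : Set ℝ := (fun y => x₀ + y) ⁻¹' Ω with hApdef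
      set Am : Set ℝ := (fun y => x₀ - y) ⁻¹' Ω with hAmdef
      have hApmeas : MeasurableSet Ap := hΩmeas.preimage (measurable_id.const_add x₀)
      have hAmmeas : MeasurableSet Am := hΩmeas.preimage (measurable_const.sub measurable_id)
      have hApvol : volume Ap = volume Ω := measure_preimage_add volume x₀ Ω
      have hAmvol : volume Am = volume Ω := by
        have : Am = Neg.neg ⁻¹' ((fun y => x₀ + y) ⁻¹' Ω) := by
          ext y; simp [hAmdef, sub_eq_add_neg]
        rw [this, Measure.measure_preimage_neg, measure_preimage_add]
      -- pointwise bound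
      have bd : ∀ z w : ℝ, z = x₀ + w ∨ z = x₀ - w → z ∈ Ω → c ≤ (M - f z) / w ^ 2 := by
        intro z w hzw hz
        have hwδ : |w| ≤ δ := by
          rcases hzw with rfl | rfl
          · simpa using hz.1
          · have h := hz.1
            simp only [sub_sub_cancel_left, abs_neg] at h
            exact h
        rcases eq_or_ne w 0 with rfl | hw0
        · have h1 : M / 2 ≤ M - f z := hz.2
          have hz0 : z = x₀ := by rcases hzw with rfl | rfl <;> simp
          have hfzM : f z = M := by rw [hz0]
          have hMz : M = 0 := by
            rw [hfzM] at h1; linarith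
          rw [hcdef, hMz]
          simp
        · have hw2 : (0:ℝ) < w ^ 2 := by positivity
          have h1 : M / 2 ≤ M - f z := hz.2
          have h2 : w ^ 2 ≤ δ ^ 2 := by nlinarith [abs_nonneg w, sq_abs w]
          calc c = (M / 2) / δ ^ 2 := by rw [hcdef, div_div]
            _ ≤ (M - f z) / w ^ 2 := div_le_div₀ (by linarith) h1 hw2 h2
      have hpt : ∀ y, Ap.indicator (fun _ => c) y + Am.indicator (fun _ => c) y ≤ g y := by
        intro y
        have hsplit : g y = (M - f (x₀ + y)) / y ^ 2 + (M - f (x₀ - y)) / y ^ 2 := by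
          rcases eq_or_ne y 0 with rfl | hy
          · simp [hgdef]
          · rw [hgdef]; field_simp; ring
        have hind : ∀ (A : Set ℝ) (s : ℝ), (y ∈ A → c ≤ s) → 0 ≤ s →
            A.indicator (fun _ => c) y ≤ s := by
          intro A s hs hs0
          by_cases hyA : y ∈ A
          · rw [Set.indicator_of_mem hyA]; exact hs hyA
          · rw [Set.indicator_of_notMem hyA]; exact hs0
        have hp : Ap.indicator (fun _ => c) y ≤ (M - f (x₀ + y)) / y ^ 2 :=
          hind _ _ (fun hy => bd _ y (Or.inl rfl) hy)
            (div_nonneg (by linarith [hfle (x₀ + y)]) (sq_nonneg y))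
        have hm : Am.indicator (fun _ => c) y ≤ (M - f (x₀ - y)) / y ^ 2 :=
          hind _ _ (fun hy => bd _ y (Or.inr rfl) hy)
            (div_nonneg (by linarith [hfle (x₀ - y)]) (sq_nonneg y))
        rw [hsplit]; linarith
      have hApfin : volume Ap < ⊤ := by rw [hApvol]; exact lt_top_iff_ne_top.2 hΩfin
      have hAmfin : volume Am < ⊤ := by rw [hAmvol]; exact lt_top_iff_ne_top.2 hΩfin
      have intp : Integrable (Ap.indicator fun _ => c) :=
        (integrable_indicator_iff hApmeas).2 (integrableOn_const hApfin.ne)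
      have intm : Integrable (Am.indicator fun _ => c) :=
        (integrable_indicator_iff hAmmeas).2 (integrableOn_const hAmfin.ne)
      have hmono : (∫ y, (Ap.indicator (fun _ => c) y + Am.indicator (fun _ => c) y)) ≤ ∫ y, g y :=
        integral_mono (intp.add intm) hgint fun y => hpt y
      rw [integral_add intp intm, integral_indicator_const c hApmeas,
        integral_indicator_const c hAmmeas, measureReal_def, measureReal_def, hApvol, hAmvol, smul_eq_mul] at hmono
      rw [hLam]
      have : c * (volume Ω).toReal ≤ 1 / 2 * ∫ y, g y := by linarith
      exact this
    · -- measure lower bound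
      rcases eq_or_lt_of_le hM0 with hMeq | hMpos
      · have hfz : ∀ y, f y = 0 := fun y => by
          have h := hle y
          rw [← hMeq] at h
          exact abs_eq_zero.mp (le_antisymm h (abs_nonneg _))
        have hΩeq : Ω = Metric.closedBall x₀ δ := by
          refine subset_antisymm hΩsub fun y hy => ?_
          refine ⟨by simpa [Real.dist_eq] using hy, ?_⟩
          rw [hfz y, ← hMeq]
          norm_num
        rw [hΩeq, hballvol, ENNReal.toReal_ofReal (by linarith)]
        rw [← hMeq]
        norm_num
      · set S := Metric.closedBall x₀ δ \ Ω with hSdef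
        have hSmeas : MeasurableSet S := measurableSet_closedBall.diff hΩmeas
        have hSbound : ∀ y ∈ S, M / 2 ≤ |f y| := by
          intro y hy
          have h1 : ¬ (M - f y ≥ M / 2) := fun h =>
            hy.2 ⟨by simpa [Real.dist_eq] using hy.1, h⟩
          push_neg at h1
          have h2 : M / 2 ≤ f y := by linarith
          exact h2.trans (le_abs_self _)
        have hSfin : volume S ≠ ⊤ := by
          refine ne_top_of_le_ne_top ?_ (measure_mono diff_subset)
          rw [hballvol]; exact ENNReal.ofReal_ne_top
        have h1 : M / 2 * (volume S).toReal ≤ ∫ y in S, |f y| := by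
          have h := setIntegral_mono_on
            (integrableOn_const hSfin)
            hf1.abs.integrableOn hSmeas hSbound
          rwa [setIntegral_const, smul_eq_mul, mul_comm] at h
        have h2 : ∫ y in S, |f y| ≤ ∫ y, |f y| :=
          setIntegral_le_integral hf1.abs (Filter.Eventually.of_forall fun x => abs_nonneg _)
        have hSvol : (volume S).toReal = 2 * δ - (volume Ω).toReal := by
          rw [hSdef, measure_diff hΩsub hΩmeas.nullMeasurableSet hΩfin,
            ENNReal.toReal_sub_of_le (measure_mono hΩsub)
              (by rw [hballvol]; exact ENNReal.ofReal_ne_top),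
            hballvol, ENNReal.toReal_ofReal (by linarith)]
        rw [hSvol] at h1
        have hdivb : 2 * δ - (volume Ω).toReal ≤ 2 * K / M := by
          rw [le_div_iff₀ hMpos]
          nlinarith
        linarith
  refine ⟨main, ?_⟩
  rcases eq_or_lt_of_le hM0 with hMeq | hMpos
  · rw [← hmax, ← hMeq]
    simpa using hLam0
  · have hδpos : (0:ℝ) < 2 * K / M := div_pos (by linarith) hMpos
    obtain ⟨h1, h2⟩ := main (2 * K / M) hδpos
    rw [← hmax]
    have hKne : K ≠ 0 := ne_of_gt hK
    have hMne : M ≠ 0 := ne_of_gt hMpos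
    have ht : 2 * K / M ≤
        (volume {y : ℝ | |y - x₀| ≤ 2 * K / M ∧ M - f y ≥ M / 2}).toReal := by
      have he : 2 * (2 * K / M) - 2 * K / M = 2 * K / M := by ring
      linarith [h2]
    have key : ∀ m k : ℝ, 0 < m → 0 < k →
        m ^ 2 / (4 * k) = m / (2 * (2 * k / m) ^ 2) * (2 * k / m) := by
      intro m k hm hk
      field_simp
      ring
    have hb2' : (0:ℝ) < 2 * (2 * K / M) ^ 2 := by nlinarith [hδpos]
    calc M ^ 2 / (4 * K) = M / (2 * (2 * K / M) ^ 2) * (2 * K / M) := key M K hMpos hK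
      _ ≤ M / (2 * (2 * K / M) ^ 2) *
          (volume {y : ℝ | |y - x₀| ≤ 2 * K / M ∧ M - f y ≥ M / 2}).toReal :=
          mul_le_mul_of_nonneg_left ht (div_nonneg hM0 hb2'.le)
      _ ≤ Lam1 f x₀ := h1
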